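/- Let < be a monomial preorder and I a homogeneous ideal of k[X]. Then k[X]/I and k[X]/L_<(I) have the same Hilbert function: dim_k (k[X]/I)_t = dim_k (k[X]/L_<(I))_t for all t ≥ 0. -/

import Mathlib

open MvPolynomial

structure MonomialPreorder (n : ℕ) where
  lt : (Fin n →₀ ℕ) → (Fin n →₀ ℕ) → Prop
  irrefl : ∀ a, ¬ lt a a
  trans : ∀ {a b c}, lt a b → lt b c → lt a c
  weak : ∀ {a b c}, (¬ lt a b ∧ ¬ lt b a) → (¬ lt b c ∧ ¬ lt c b) → ¬ lt a c ∧ ¬ lt c a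
  compat : ∀ {a b} (c), lt a b → lt (a + c) (b + c)
  cancel : ∀ {a b} (c), lt (a + c) (b + c) → lt a b

variable {n : ℕ} {k : Type*} [Field k]

open Classical in
noncomputable def leadingPart (P : MonomialPreorder n) (f : MvPolynomial (Fin n) k) :
    MvPolynomial (Fin n) k :=
  ∑ a ∈ f.support.filter (fun a => ∀ b ∈ f.support, ¬ P.lt a b),
    monomial a (coeff a f)

noncomputable def Sles (k : Type*) [Field k] (P : MonomialPreorder n) : Submonoid (MvPolynomial (Fin n) k) :=
  Submonoid.closure {u | leadingPart P u = 1}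

abbrev Loc (k : Type*) [Field k] (P : MonomialPreorder n) := Localization (Sles k P)

noncomputable def leadingIdealWrt (P Q : MonomialPreorder n) (G : Set (Loc k P)) :
    Ideal (MvPolynomial (Fin n) k) :=
  Ideal.span {q | ∃ f ∈ G, ∃ u p : MvPolynomial (Fin n) k, leadingPart P u = 1 ∧
    algebraMap (MvPolynomial (Fin n) k) (Loc k P) p = algebraMap (MvPolynomial (Fin n) k) (Loc k P) u * f ∧
    q = leadingPart Q p}

noncomputable def leadingIdeal (P : MonomialPreorder n) (G : Set (Loc k P)) :
    Ideal (MvPolynomial (Fin n) k) := leadingIdealWrt P P G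

noncomputable def leadingIdealPoly (P : MonomialPreorder n) (Q : Set (MvPolynomial (Fin n) k)) :
    Ideal (MvPolynomial (Fin n) k) :=
  Ideal.span (leadingPart P '' Q)

/-- The Hilbert function of k[X]/I at t: the k-dimension of the image of the space of
homogeneous degree-t polynomials in the quotient k[X]/I. -/
noncomputable def hilbertFunction (n : ℕ) (k : Type*) [Field k]
    (I : Ideal (MvPolynomial (Fin n) k)) (t : ℕ) : ℕ :=
  Module.finrank k (Submodule.map (Ideal.Quotient.mkₐ k I).toLinearMap
    (homogeneousSubmodule (Fin n) k t))

/-! ### Auxiliary development -/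

open Classical in
/-- The set of monomials of `f` that are maximal with respect to `P`. -/
noncomputable def maxSet (P : MonomialPreorder n) (f : MvPolynomial (Fin n) k) :
    Finset (Fin n →₀ ℕ) :=
  f.support.filter (fun a => ∀ b ∈ f.support, ¬ P.lt a b)

lemma leadingPart_eq (P : MonomialPreorder n) (f : MvPolynomial (Fin n) k) :
    leadingPart P f = ∑ a ∈ maxSet P f, monomial a (coeff a f) := rfl

lemma mem_maxSet {P : MonomialPreorder n} {f : MvPolynomial (Fin n) k} {a : Fin n →₀ ℕ} :
    a ∈ maxSet P f ↔ a ∈ f.support ∧ ∀ b ∈ f.support, ¬ P.lt a b := by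
  classical
  simp [maxSet]

lemma coeff_leadingPart (P : MonomialPreorder n) (f : MvPolynomial (Fin n) k) (d : Fin n →₀ ℕ) :
    coeff d (leadingPart P f) = if d ∈ maxSet P f then coeff d f else 0 := by
  classical
  rw [leadingPart_eq]
  rw [← Finset.sum_ite_eq' (maxSet P f) d (fun a => coeff a f)]
  rw [coeff_sum]
  refine Finset.sum_congr rfl fun a _ => ?_
  rw [coeff_monomial]

lemma support_leadingPart_subset (P : MonomialPreorder n) (f : MvPolynomial (Fin n) k) :
    (leadingPart P f).support ⊆ f.support := by
  intro d hd
  rw [mem_support_iff, coeff_leadingPart] at hd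
  split_ifs at hd with h
  · exact (mem_maxSet.1 h).1
  · exact absurd rfl hd

lemma leadingPart_zero (P : MonomialPreorder n) : leadingPart P (0 : MvPolynomial (Fin n) k) = 0 := by
  classical
  rw [leadingPart_eq]
  apply Finset.sum_eq_zero
  intro a ha
  simp

/-- Existence of a maximal element of a finite nonempty set for the preorder. -/
lemma exists_max (P : MonomialPreorder n) :
    ∀ (M : Finset (Fin n →₀ ℕ)), M.Nonempty → ∃ a ∈ M, ∀ b ∈ M, ¬ P.lt a b := by
  classical
  intro M
  induction M using Finset.induction_on with
  | empty => intro h; simp at h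
  | insert a M ha ih =>
    intro _
    rcases M.eq_empty_or_nonempty with rfl | hM'
    · exact ⟨a, by simp, by simpa using P.irrefl a⟩
    · obtain ⟨m, hm, hmax⟩ := ih hM'
      by_cases h : P.lt m a
      · refine ⟨a, Finset.mem_insert_self _ _, ?_⟩
        intro b hb
        rcases Finset.mem_insert.1 hb with rfl | hb
        · exact P.irrefl b
        · exact fun hab => hmax b hb (P.trans h hab)
      · refine ⟨m, Finset.mem_insert_of_mem hm, ?_⟩
        intro b hb
        rcases Finset.mem_insert.1 hb with rfl | hb
        · exact h
        · exact hmax b hb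

/-- Multiplying by a monomial shifts the leading part. -/
lemma leadingPart_monomial_mul (P : MonomialPreorder n) (a : Fin n →₀ ℕ)
    (f : MvPolynomial (Fin n) k) :
    leadingPart P (monomial a (1 : k) * f) = monomial a 1 * leadingPart P f := by
  classical
  have hsupp : (monomial a (1 : k) * f).support = f.support.map (addLeftEmbedding a) := by
    rw [← single_eq_monomial]
    exact AddMonoidAlgebra.support_coeff_single_mul f 1 (fun y => by simp) a
  have hmax : maxSet P (monomial a (1 : k) * f) = (maxSet P f).map (addLeftEmbedding a) := by
    ext d
    rw [Finset.mem_map, mem_maxSet, hsupp]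
    constructor
    · rintro ⟨hd, hdmax⟩
      rw [Finset.mem_map] at hd
      obtain ⟨b, hb, hbd⟩ := hd
      rw [addLeftEmbedding_apply] at hbd
      subst hbd
      refine ⟨b, mem_maxSet.2 ⟨hb, fun c hc hlt => ?_⟩, by rw [addLeftEmbedding_apply]⟩
      refine hdmax (a + c) (Finset.mem_map.2 ⟨c, hc, by rw [addLeftEmbedding_apply]⟩) ?_
      have h2 := P.compat a hlt
      rwa [add_comm b a, add_comm c a] at h2
    · rintro ⟨b, hb, hbd⟩
      rw [addLeftEmbedding_apply] at hbd
      subst hbd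
      obtain ⟨hbf, hbmax⟩ := mem_maxSet.1 hb
      refine ⟨Finset.mem_map.2 ⟨b, hbf, by rw [addLeftEmbedding_apply]⟩, ?_⟩
      rintro e he hlt
      rw [Finset.mem_map] at he
      obtain ⟨c, hc, hce⟩ := he
      rw [addLeftEmbedding_apply] at hce
      subst hce
      refine hbmax c hc (P.cancel a ?_)
      rwa [add_comm a b, add_comm a c] at hlt
  rw [leadingPart_eq, leadingPart_eq, hmax, Finset.sum_map, Finset.mul_sum]
  refine Finset.sum_congr rfl fun b _ => ?_
  rw [addLeftEmbedding_apply, coeff_monomial_mul, one_mul, monomial_mul, one_mul]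

/-- Projection onto the monomials in `C`, as a linear map. -/
noncomputable def projOn (C : Finset (Fin n →₀ ℕ)) :
    MvPolynomial (Fin n) k →ₗ[k] MvPolynomial (Fin n) k where
  toFun f := ∑ a ∈ C, monomial a (coeff a f)
  map_add' f g := by
    simp only [coeff_add, map_add]
    rw [Finset.sum_add_distrib]
  map_smul' c f := by
    simp only [coeff_smul, RingHom.id_apply, smul_eq_mul, Finset.smul_sum]
    refine Finset.sum_congr rfl fun a _ => ?_
    rw [smul_monomial, smul_eq_mul]

lemma coeff_projOn (C : Finset (Fin n →₀ ℕ)) (f : MvPolynomial (Fin n) k) (d : Fin n →₀ ℕ) :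
    coeff d (projOn C f) = if d ∈ C then coeff d f else 0 := by
  classical
  show coeff d (∑ a ∈ C, monomial a (coeff a f)) = _
  rw [← Finset.sum_ite_eq' C d (fun a => coeff a f), coeff_sum]
  refine Finset.sum_congr rfl fun a _ => ?_
  rw [coeff_monomial]

lemma support_projOn_subset (C : Finset (Fin n →₀ ℕ)) (f : MvPolynomial (Fin n) k) :
    (projOn (k := k) C f).support ⊆ C := by
  intro d hd
  rw [mem_support_iff, coeff_projOn] at hd
  split_ifs at hd with h
  · exact h
  · exact absurd rfl hd

lemma fd_of_supports (N : Finset (Fin n →₀ ℕ)) (V : Submodule k (MvPolynomial (Fin n) k))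
    (hV : ∀ f ∈ V, f.support ⊆ N) : FiniteDimensional k V := by
  classical
  have hle : V ≤ restrictSupport k (N : Set (Fin n →₀ ℕ)) := by
    intro f hf
    exact (mem_restrictSupport_iff k).2 (by exact_mod_cast hV f hf)
  haveI : FiniteDimensional k (restrictSupport k (N : Set (Fin n →₀ ℕ))) :=
    Module.Finite.of_basis (basisRestrictSupport k _)
  exact Submodule.finiteDimensional_of_le hle

/-- Key combinatorial lemma: taking leading parts preserves the dimension of a space of
polynomials supported in a fixed finite set of monomials. -/
lemma finrank_span_leadingPart (P : MonomialPreorder n) :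
    ∀ (M : Finset (Fin n →₀ ℕ)) (U : Submodule k (MvPolynomial (Fin n) k)),
      (∀ f ∈ U, f.support ⊆ M) →
      Module.finrank k
          (Submodule.span k (leadingPart P '' (U : Set (MvPolynomial (Fin n) k)))) =
        Module.finrank k U := by
  classical
  intro M
  induction M using Finset.strongInduction with
  | _ M ih =>
  intro U hU
  rcases M.eq_empty_or_nonempty with rfl | hMne
  · have hU0 : U = ⊥ := by
      rw [eq_bot_iff]
      intro f hf
      have h0 : f.support = ∅ := Finset.subset_empty.mp (hU f hf)
      simpa [Submodule.mem_bot] using support_eq_empty.mp h0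
    have hspan : Submodule.span k (leadingPart P '' (U : Set (MvPolynomial (Fin n) k))) = ⊥ := by
      rw [Submodule.span_eq_bot]
      rintro _ ⟨f, hf, rfl⟩
      rw [hU0] at hf
      simp only [Submodule.bot_coe, Set.mem_singleton_iff] at hf
      rw [hf, leadingPart_zero]
    rw [hspan, hU0]
  · obtain ⟨a₀, ha₀M, ha₀max⟩ := exists_max P M hMne
    set C : Finset (Fin n →₀ ℕ) := M.filter (fun b => ∀ c ∈ M, ¬ P.lt b c) with hCdef
    have hCM : C ⊆ M := Finset.filter_subset _ _
    have hCne : C.Nonempty := ⟨a₀, Finset.mem_filter.2 ⟨ha₀M, ha₀max⟩⟩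
    -- leading part = projection onto C for polynomials touching C
    have hLP : ∀ f : MvPolynomial (Fin n) k, f.support ⊆ M →
        (∃ a ∈ f.support, a ∈ C) → leadingPart P f = projOn C f := by
      intro f hfM ⟨a₁, ha₁f, ha₁C⟩
      have ha₁max : ∀ c ∈ M, ¬ P.lt a₁ c := (Finset.mem_filter.1 ha₁C).2
      ext d
      rw [coeff_leadingPart, coeff_projOn]
      by_cases hd : coeff d f = 0
      · split_ifs <;> simp [hd]
      · have hdf : d ∈ f.support := mem_support_iff.2 hd
        have hiff : d ∈ maxSet P f ↔ d ∈ C := by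
          constructor
          · intro hdmax
            obtain ⟨_, hdm⟩ := mem_maxSet.1 hdmax
            refine Finset.mem_filter.2 ⟨hfM hdf, fun c hcM hlt => ?_⟩
            have s1 : ¬ P.lt d a₁ := hdm a₁ ha₁f
            have s2 : ¬ P.lt a₁ d := ha₁max d (hfM hdf)
            have s3 : ¬ P.lt a₁ c := ha₁max c hcM
            have s4 : ¬ P.lt c a₁ := fun h => s1 (P.trans hlt h)
            exact (P.weak ⟨s1, s2⟩ ⟨s3, s4⟩).1 hlt
          · intro hdC
            exact mem_maxSet.2 ⟨hdf, fun b hb => (Finset.mem_filter.1 hdC).2 b (hfM hb)⟩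
        rw [if_congr hiff rfl rfl]
    set A : Submodule k (MvPolynomial (Fin n) k) := Submodule.map (projOn (k := k) C) U with hAdef
    set K : Submodule k (MvPolynomial (Fin n) k) :=
      U ⊓ LinearMap.ker (projOn (k := k) C) with hKdef
    have hKU : K ≤ U := inf_le_left
    have hK : ∀ f ∈ K, f.support ⊆ M \ C := by
      intro f hf
      obtain ⟨hfU, hfker⟩ := Submodule.mem_inf.1 hf
      intro d hdf
      refine Finset.mem_sdiff.2 ⟨hU f hfU hdf, fun hdC => ?_⟩
      have : coeff d (projOn (k := k) C f) = coeff d f := by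
        rw [coeff_projOn, if_pos hdC]
      rw [LinearMap.mem_ker.1 hfker] at this
      exact mem_support_iff.1 hdf this.symm
    have hssub : M \ C ⊂ M := Finset.sdiff_ssubset hCM hCne
    have IH := ih (M \ C) hssub K hK
    -- finite dimensionality
    haveI fdU : FiniteDimensional k U := fd_of_supports M U hU
    haveI fdA : FiniteDimensional k A := by
      refine fd_of_supports M A ?_
      rintro f hf
      obtain ⟨g, _, rfl⟩ := Submodule.mem_map.1 hf
      exact fun d hd => hCM (support_projOn_subset C g hd)
    have hsuppspan : ∀ x ∈ Submodule.span k (leadingPart P '' (K : Set (MvPolynomial (Fin n) k))),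
        x.support ⊆ M \ C := by
      intro x hx
      have hle : Submodule.span k (leadingPart P '' (K : Set (MvPolynomial (Fin n) k))) ≤
          restrictSupport k ((M \ C : Finset (Fin n →₀ ℕ)) : Set (Fin n →₀ ℕ)) := by
        rw [Submodule.span_le]
        rintro _ ⟨g, hg, rfl⟩
        exact SetLike.mem_coe.2 ((Finsupp.mem_supported k _).2
          (by exact_mod_cast (support_leadingPart_subset P g).trans (hK g hg)))
      have hmem := (mem_restrictSupport_iff k).1 (hle hx)
      exact_mod_cast hmem
    haveI fdB : FiniteDimensional k
        (Submodule.span k (leadingPart P '' (K : Set (MvPolynomial (Fin n) k)))) :=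
      fd_of_supports (M \ C) _ hsuppspan
    -- claim 1: span of leading parts splits
    have claim1 : Submodule.span k (leadingPart P '' (U : Set (MvPolynomial (Fin n) k))) =
        A ⊔ Submodule.span k (leadingPart P '' (K : Set (MvPolynomial (Fin n) k))) := by
      apply le_antisymm
      · rw [Submodule.span_le]
        rintro _ ⟨f, hf, rfl⟩
        by_cases hc : ∃ a ∈ f.support, a ∈ C
        · rw [hLP f (hU f hf) hc]
          exact SetLike.le_def.1 le_sup_left (Submodule.mem_map_of_mem hf)
        · push_neg at hc
          have hfK : f ∈ K := by
            refine Submodule.mem_inf.2 ⟨hf, LinearMap.mem_ker.2 ?_⟩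
            ext d
            rw [coeff_projOn, coeff_zero]
            split_ifs with h
            · by_contra hne
              exact hc d (mem_support_iff.2 fun h0 => hne (by rw [h0])) h
            · rfl
          have hmem : leadingPart P f ∈ leadingPart P '' (K : Set (MvPolynomial (Fin n) k)) :=
            ⟨f, hfK, rfl⟩
          exact SetLike.le_def.1 le_sup_right (Submodule.subset_span hmem)
      · refine sup_le ?_ (Submodule.span_mono (Set.image_mono hKU))
        rintro x hx
        obtain ⟨f, hf, rfl⟩ := Submodule.mem_map.1 hx
        by_cases hc : ∃ a ∈ f.support, a ∈ C
        · rw [← hLP f (hU f hf) hc]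
          exact Submodule.subset_span ⟨f, hf, rfl⟩
        · push_neg at hc
          have : projOn (k := k) C f = 0 := by
            ext d
            rw [coeff_projOn, coeff_zero]
            split_ifs with h
            · by_contra hne
              exact hc d (mem_support_iff.2 fun h0 => hne (by rw [h0])) h
            · rfl
          rw [this]
          exact Submodule.zero_mem _
    -- claim 2: the two pieces intersect trivially
    have claim2 : A ⊓ Submodule.span k (leadingPart P '' (K : Set (MvPolynomial (Fin n) k))) = ⊥ := by
      rw [eq_bot_iff]
      rintro x hx
      obtain ⟨hxA, hxB⟩ := Submodule.mem_inf.1 hx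
      obtain ⟨f, _, rfl⟩ := Submodule.mem_map.1 hxA
      have hsub1 : (projOn (k := k) C f).support ⊆ C := support_projOn_subset C f
      have hsub2 : (projOn (k := k) C f).support ⊆ M \ C := hsuppspan _ hxB
      have : (projOn (k := k) C f).support = ∅ := by
        rw [Finset.eq_empty_iff_forall_notMem]
        intro d hd
        exact (Finset.mem_sdiff.1 (hsub2 hd)).2 (hsub1 hd)
      simpa [Submodule.mem_bot] using support_eq_empty.mp this
    -- finrank computations
    have e1 : Module.finrank k
        (Submodule.span k (leadingPart P '' (U : Set (MvPolynomial (Fin n) k)))) =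
        Module.finrank k A + Module.finrank k
          (Submodule.span k (leadingPart P '' (K : Set (MvPolynomial (Fin n) k)))) := by
      have := Submodule.finrank_sup_add_finrank_inf_eq A
        (Submodule.span k (leadingPart P '' (K : Set (MvPolynomial (Fin n) k))))
      rw [claim2, finrank_bot, add_zero] at this
      rw [claim1, this]
    have e2 : Module.finrank k A + Module.finrank k K = Module.finrank k U := by
      have hrn := LinearMap.finrank_range_add_finrank_ker
        ((projOn (k := k) C).comp U.subtype)
      have hrange : LinearMap.range ((projOn (k := k) C).comp U.subtype) = A := by
        rw [LinearMap.range_comp, Submodule.range_subtype]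
      have hker : LinearMap.ker ((projOn (k := k) C).comp U.subtype) =
          Submodule.comap U.subtype (LinearMap.ker (projOn (k := k) C)) := by
        rw [LinearMap.ker_comp]
      have hkerrank : Module.finrank k
          (LinearMap.ker ((projOn (k := k) C).comp U.subtype)) = Module.finrank k K := by
        rw [hker, ← Submodule.finrank_map_subtype_eq U, Submodule.map_comap_subtype]
      rw [hrange, hkerrank] at hrn
      exact hrn
    rw [e1, IH]
    exact e2

/-- Homogeneous component of a monomial. -/
lemma homogComp_monomial (t : ℕ) (a : Fin n →₀ ℕ) (c : k) :
    homogeneousComponent t (monomial a c) = if a.degree = t then monomial a c else 0 := by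
  classical
  ext d
  rw [coeff_homogeneousComponent, apply_ite (coeff d), coeff_zero]
  by_cases had : a = d
  · subst had
    split_ifs <;> simp_all [coeff_monomial]
  · rw [coeff_monomial, if_neg had]
    split_ifs <;> simp [coeff_monomial, had]

lemma mem_support_homogComp {t : ℕ} {h : MvPolynomial (Fin n) k} {a : Fin n →₀ ℕ} :
    a ∈ (homogeneousComponent t h).support ↔ a.degree = t ∧ a ∈ h.support := by
  rw [mem_support_iff, coeff_homogeneousComponent]
  split_ifs with h1
  · simp [h1, mem_support_iff]
  · simp [h1]

lemma isHomogeneous_leadingPart (P : MonomialPreorder n) {t : ℕ} {f : MvPolynomial (Fin n) k}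
    (hf : f.IsHomogeneous t) : (leadingPart P f).IsHomogeneous t := by
  intro d hd
  rw [coeff_leadingPart] at hd
  split_ifs at hd with h
  · exact hf hd
  · exact absurd rfl hd

variable (P : MonomialPreorder n) (I : Ideal (MvPolynomial (Fin n) k))

/-- The span of leading parts of homogeneous degree-`t` elements of `I`. -/
noncomputable def WI (t : ℕ) : Submodule k (MvPolynomial (Fin n) k) :=
  Submodule.span k (leadingPart P ''
    ((I.restrictScalars k ⊓ homogeneousSubmodule (Fin n) k t : Submodule k _) :
      Set (MvPolynomial (Fin n) k)))

/-- Lemma A: the degree-`t` homogeneous component of a leading part of an element of a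
homogeneous ideal is in the span of leading parts of homogeneous degree-`t` elements. -/
lemma homogComp_leadingPart_mem
    (hI : ∀ f ∈ I, ∀ d : ℕ, homogeneousComponent d f ∈ I)
    {h : MvPolynomial (Fin n) k} (hh : h ∈ I) (t : ℕ) :
    homogeneousComponent t (leadingPart P h) ∈ WI P I t := by
  classical
  have hsum : homogeneousComponent t (leadingPart P h) =
      ∑ a ∈ (maxSet P h).filter (fun a => a.degree = t), monomial a (coeff a h) := by
    rw [leadingPart_eq, map_sum, Finset.sum_filter]
    refine Finset.sum_congr rfl fun a _ => ?_
    rw [homogComp_monomial]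
  by_cases hne : ((maxSet P h).filter (fun a => a.degree = t)).Nonempty
  · obtain ⟨a₀, ha₀⟩ := hne
    obtain ⟨ha₀T, ha₀t⟩ := Finset.mem_filter.1 ha₀
    obtain ⟨ha₀h, ha₀max⟩ := mem_maxSet.1 ha₀T
    set ht : MvPolynomial (Fin n) k := homogeneousComponent t h with hhtdef
    have hTT : (maxSet P h).filter (fun a => a.degree = t) = maxSet P ht := by
      ext a
      rw [Finset.mem_filter, mem_maxSet, mem_maxSet]
      constructor
      · rintro ⟨⟨hah, hamax⟩, hat⟩
        exact ⟨mem_support_homogComp.2 ⟨hat, hah⟩,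
          fun b hb => hamax b (mem_support_homogComp.1 hb).2⟩
      · rintro ⟨haht, hamax⟩
        obtain ⟨hat, hah⟩ := mem_support_homogComp.1 haht
        refine ⟨⟨hah, fun b hbh hlt => ?_⟩, hat⟩
        have s1 : ¬ P.lt a a₀ := hamax a₀ (mem_support_homogComp.2 ⟨ha₀t, ha₀h⟩)
        have s2 : ¬ P.lt a₀ a := ha₀max a hah
        have s3 : ¬ P.lt a₀ b := ha₀max b hbh
        have s4 : ¬ P.lt b a₀ := fun hba => s1 (P.trans hlt hba)
        exact (P.weak ⟨s1, s2⟩ ⟨s3, s4⟩).1 hlt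
    have hLht : homogeneousComponent t (leadingPart P h) = leadingPart P ht := by
      rw [hsum, hTT, leadingPart_eq]
      refine Finset.sum_congr rfl fun a ha => ?_
      obtain ⟨hat, hah⟩ := mem_support_homogComp.1 (mem_maxSet.1 ha).1
      rw [hhtdef, coeff_homogeneousComponent, if_pos hat]
    rw [hLht]
    refine Submodule.subset_span ⟨ht, ?_, rfl⟩
    exact Submodule.mem_inf.2 ⟨hI h hh t, homogeneousComponent_mem t h⟩
  · rw [Finset.not_nonempty_iff_eq_empty] at hne
    rw [hsum, hne, Finset.sum_empty]
    exact Submodule.zero_mem _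

/-- Main span lemma: homogeneous components of multiples of elements of the leading ideal
lie in the span of leading parts of homogeneous elements of `I`. -/
lemma homogComp_mul_mem
    (hI : ∀ f ∈ I, ∀ d : ℕ, homogeneousComponent d f ∈ I) :
    ∀ x ∈ leadingIdealPoly P (I : Set (MvPolynomial (Fin n) k)),
      ∀ (g : MvPolynomial (Fin n) k) (t : ℕ),
        homogeneousComponent t (g * x) ∈ WI P I t := by
  intro x hx
  refine Submodule.span_induction ?_ ?_ ?_ ?_ hx
  · rintro y ⟨f, hfI, rfl⟩ g t
    have hexp : g * leadingPart P f =
        ∑ a ∈ g.support, monomial a (coeff a g) * leadingPart P f := by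
      rw [← Finset.sum_mul, ← as_sum]
    rw [hexp, map_sum]
    refine Submodule.sum_mem _ fun a _ => ?_
    have h1 : monomial a (coeff a g) * leadingPart P f =
        C (coeff a g) * (monomial a 1 * leadingPart P f) := by
      rw [← mul_assoc, C_mul_monomial, mul_one]
    rw [h1, ← leadingPart_monomial_mul, homogeneousComponent_C_mul, ← smul_eq_C_mul]
    exact Submodule.smul_mem _ _
      (homogComp_leadingPart_mem P I hI (I.mul_mem_left _ hfI) t)
  · intro g t
    rw [mul_zero, map_zero]
    exact Submodule.zero_mem _
  · intro x y _ _ px py g t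
    rw [mul_add, map_add]
    exact Submodule.add_mem _ (px g t) (py g t)
  · intro a x _ px g t
    rw [smul_eq_mul, ← mul_assoc]
    exact px (g * a) t

/-- The degree-`t` part of the leading ideal is exactly the span of leading parts. -/
lemma inf_leadingIdeal_eq
    (hI : ∀ f ∈ I, ∀ d : ℕ, homogeneousComponent d f ∈ I) (t : ℕ) :
    (leadingIdealPoly P (I : Set (MvPolynomial (Fin n) k))).restrictScalars k ⊓
        homogeneousSubmodule (Fin n) k t = WI P I t := by
  apply le_antisymm
  · intro x hx
    obtain ⟨hx1, hx2⟩ := Submodule.mem_inf.1 hx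
    have hx1' : x ∈ leadingIdealPoly P (I : Set (MvPolynomial (Fin n) k)) := hx1
    have hmem := homogComp_mul_mem P I hI x hx1' 1 t
    rwa [one_mul, homogeneousComponent_of_mem hx2, if_pos rfl] at hmem
  · rw [WI, Submodule.span_le]
    rintro _ ⟨f, hf, rfl⟩
    obtain ⟨hfI, hfh⟩ := Submodule.mem_inf.1 hf
    rw [SetLike.mem_coe]
    refine Submodule.mem_inf.2 ⟨?_, ?_⟩
    · exact Ideal.subset_span ⟨f, hfI, rfl⟩
    · exact isHomogeneous_leadingPart P hfh

/-- The finite set of exponents of degree-`t` monomials (as a subset of a box). -/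
noncomputable def degMonomials (n t : ℕ) : Finset (Fin n →₀ ℕ) :=
  Finset.image
    (fun f : Fin n → Fin (t + 1) => Finsupp.equivFunOnFinite.symm (fun i => (f i : ℕ)))
    Finset.univ

lemma support_subset_degMonomials {t : ℕ} {f : MvPolynomial (Fin n) k}
    (hf : f ∈ homogeneousSubmodule (Fin n) k t) : f.support ⊆ degMonomials n t := by
  intro a ha
  have hdeg : a.degree = t := by
    rw [Finsupp.degree_eq_weight_one]
    exact hf (mem_support_iff.1 ha)
  have hle : ∀ i, a i ≤ t := fun i => hdeg ▸ Finsupp.le_degree i a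
  refine Finset.mem_image.2 ⟨fun i => ⟨a i, Nat.lt_succ_of_le (hle i)⟩, Finset.mem_univ _, ?_⟩
  ext i
  simp [Finsupp.equivFunOnFinite]

lemma fd_homogeneousSubmodule (t : ℕ) :
    FiniteDimensional k (homogeneousSubmodule (Fin n) k t) :=
  fd_of_supports (degMonomials n t) _ (fun _ hf => support_subset_degMonomials hf)

/-- Rank-nullity for the Hilbert function. -/
lemma hilbert_add (J : Ideal (MvPolynomial (Fin n) k)) (t : ℕ) :
    hilbertFunction n k J t +
        Module.finrank k
          (J.restrictScalars k ⊓ homogeneousSubmodule (Fin n) k t : Submodule k _) =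
      Module.finrank k (homogeneousSubmodule (Fin n) k t) := by
  classical
  haveI := fd_homogeneousSubmodule (n := n) (k := k) t
  set V := homogeneousSubmodule (Fin n) k t with hV
  set g := ((Ideal.Quotient.mkₐ k J).toLinearMap).comp V.subtype with hg
  have hrange : LinearMap.range g = Submodule.map (Ideal.Quotient.mkₐ k J).toLinearMap V := by
    rw [hg, LinearMap.range_comp, Submodule.range_subtype]
  have hker : LinearMap.ker g = Submodule.comap V.subtype (J.restrictScalars k) := by
    rw [hg, LinearMap.ker_comp]
    have hkk : LinearMap.ker (Ideal.Quotient.mkₐ k J).toLinearMap = J.restrictScalars k := by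
      ext x
      simp only [LinearMap.mem_ker, AlgHom.toLinearMap_apply, Ideal.Quotient.mkₐ_eq_mk,
        Ideal.Quotient.eq_zero_iff_mem, Submodule.restrictScalars_mem]
    rw [hkk]
  have h1 := LinearMap.finrank_range_add_finrank_ker g
  rw [hrange, hker] at h1
  have h2 : Module.finrank k (Submodule.comap V.subtype (J.restrictScalars k)) =
      Module.finrank k (J.restrictScalars k ⊓ V : Submodule k _) := by
    rw [← Submodule.finrank_map_subtype_eq V, Submodule.map_comap_subtype, inf_comm]
  rw [h2] at h1
  exact h1

/-- For a homogeneous ideal I, k[X]/I and k[X]/L_<(I) have the same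
Hilbert function. -/
theorem hilbertFunction_leadingIdeal (n : ℕ) (k : Type*) [Field k] (P : MonomialPreorder n)
    (I : Ideal (MvPolynomial (Fin n) k))
    (hI : ∀ f ∈ I, ∀ d : ℕ, homogeneousComponent d f ∈ I) :
    ∀ t : ℕ, hilbertFunction n k I t =
      hilbertFunction n k (leadingIdealPoly P (I : Set (MvPolynomial (Fin n) k))) t := by
  intro t
  have e1 := hilbert_add I t
  have e2 := hilbert_add (leadingIdealPoly P (I : Set (MvPolynomial (Fin n) k))) t
  have e3 := inf_leadingIdeal_eq P I hI t
  have e4 : Module.finrank k (WI P I t) =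
      Module.finrank k
        (I.restrictScalars k ⊓ homogeneousSubmodule (Fin n) k t : Submodule k _) := by
    refine finrank_span_leadingPart P (degMonomials n t) _ ?_
    intro f hf
    exact support_subset_degMonomials (Submodule.mem_inf.1 hf).2
  rw [e3, e4] at e2
  omega
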